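/- arXiv:2412.20224 — 5 statements merged into one kernel-verified Lean document; each statement's English description precedes it below -/
import Mathlib

section
/- If A and A' both lie in the sup-norm ball of radius γ around A* = (1/8, -1/2, 1/2) with γ ≤ 1/4, then for all real x with |x| ≥ 2, |f_A(x) - f_{A'}(x)| ≤ 8 ||A - A'||_∞ / (x^2 + 1). -/
/-- `f_A(x) = A1/(x+A2) - A1/(x+A3)`. -/
noncomputable def fA (A : ℝ × ℝ × ℝ) (x : ℝ) : ℝ := A.1 / (x + A.2.1) - A.1 / (x + A.2.2)

/-- The point `A* = (1/8, -1/2, 1/2)`. -/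
noncomputable def Astar : ℝ × ℝ × ℝ := (1/8, -1/2, 1/2)

set_option maxHeartbeats 1000000 in
theorem stmt3 (γ : ℝ) (hγ : γ ≤ 1/4) (A A' : ℝ × ℝ × ℝ)
    (hA : ‖A - Astar‖ < γ) (hA' : ‖A' - Astar‖ < γ)
    (x : ℝ) (hx : 2 ≤ |x|) :
    |fA A x - fA A' x| ≤ 8 * ‖A - A'‖ / (x^2 + 1) := by
  obtain ⟨a, b, c⟩ := A
  obtain ⟨a', b', c'⟩ := A'
  -- component bounds for A
  have h1 := (norm_fst_le (((a,b,c) : ℝ×ℝ×ℝ) - Astar)).trans_lt hA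
  have h2 := ((norm_fst_le ((((a,b,c) : ℝ×ℝ×ℝ) - Astar).2)).trans (norm_snd_le _)).trans_lt hA
  have h3 := ((norm_snd_le ((((a,b,c) : ℝ×ℝ×ℝ) - Astar).2)).trans (norm_snd_le _)).trans_lt hA
  simp [Astar, Real.norm_eq_abs, Prod.sub_def] at h1 h2 h3
  obtain ⟨p1, p2⟩ := abs_le.mp (h1.le.trans hγ)
  obtain ⟨q1, q2⟩ := abs_le.mp (h2.le.trans hγ)
  obtain ⟨r1, r2⟩ := abs_le.mp (h3.le.trans hγ)
  norm_num at p1 p2 q1 q2 r1 r2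
  have ha1 : -1/8 ≤ a := by linarith
  have ha2 : a ≤ 3/8 := by linarith
  have hb1 : -3/4 ≤ b := by linarith
  have hb2 : b ≤ -1/4 := by linarith
  have hc1 : 1/4 ≤ c := by linarith
  have hc2 : c ≤ 3/4 := by linarith
  clear p1 p2 q1 q2 r1 r2 h1 h2 h3 hA
  -- component bounds for A'
  have h1 := (norm_fst_le (((a',b',c') : ℝ×ℝ×ℝ) - Astar)).trans_lt hA'
  have h2 := ((norm_fst_le ((((a',b',c') : ℝ×ℝ×ℝ) - Astar).2)).trans (norm_snd_le _)).trans_lt hA'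
  have h3 := ((norm_snd_le ((((a',b',c') : ℝ×ℝ×ℝ) - Astar).2)).trans (norm_snd_le _)).trans_lt hA'
  simp [Astar, Real.norm_eq_abs, Prod.sub_def] at h1 h2 h3
  obtain ⟨p1, p2⟩ := abs_le.mp (h1.le.trans hγ)
  obtain ⟨q1, q2⟩ := abs_le.mp (h2.le.trans hγ)
  obtain ⟨r1, r2⟩ := abs_le.mp (h3.le.trans hγ)
  norm_num at p1 p2 q1 q2 r1 r2
  have ha1' : -1/8 ≤ a' := by linarith
  have ha2' : a' ≤ 3/8 := by linarith
  have hb1' : -3/4 ≤ b' := by linarith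
  have hb2' : b' ≤ -1/4 := by linarith
  have hc1' : 1/4 ≤ c' := by linarith
  have hc2' : c' ≤ 3/4 := by linarith
  clear p1 p2 q1 q2 r1 r2 h1 h2 h3 hA'
  -- distance bounds
  have hd0 : (0:ℝ) ≤ ‖((a,b,c) : ℝ×ℝ×ℝ) - (a',b',c')‖ := norm_nonneg _
  have da : |a - a'| ≤ ‖((a,b,c) : ℝ×ℝ×ℝ) - (a',b',c')‖ := by
    simpa [Real.norm_eq_abs, Prod.sub_def] using norm_fst_le (((a,b,c) : ℝ×ℝ×ℝ) - (a',b',c'))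
  have db : |b - b'| ≤ ‖((a,b,c) : ℝ×ℝ×ℝ) - (a',b',c')‖ := by
    simpa [Real.norm_eq_abs, Prod.sub_def] using
      (norm_fst_le ((((a,b,c) : ℝ×ℝ×ℝ) - (a',b',c')).2)).trans (norm_snd_le _)
  have dc : |c - c'| ≤ ‖((a,b,c) : ℝ×ℝ×ℝ) - (a',b',c')‖ := by
    simpa [Real.norm_eq_abs, Prod.sub_def] using
      (norm_snd_le ((((a,b,c) : ℝ×ℝ×ℝ) - (a',b',c')).2)).trans (norm_snd_le _)
  set d : ℝ := ‖((a,b,c) : ℝ×ℝ×ℝ) - (a',b',c')‖ with hd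
  clear_value d
  clear hd
  -- geometry of x
  obtain ⟨t, htdef⟩ : ∃ t : ℝ, t = |x| := ⟨|x|, rfl⟩
  have ht : 2 ≤ t := htdef ▸ hx
  have hxle : x ≤ t := htdef ▸ le_abs_self x
  have hxge : -t ≤ x := htdef ▸ neg_abs_le x
  have hx2 : x^2 = t^2 := by rw [htdef, sq_abs]
  have hm : (0:ℝ) < t^2 - t/2 - 9/16 := by nlinarith
  -- individual denominators nonzero
  have hxb : x + b ≠ 0 := by
    intro h
    rcases le_or_gt 0 x with e | e
    · have : t = x := by rw [htdef, abs_of_nonneg e]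
      linarith
    · have : t = -x := by rw [htdef, abs_of_neg e]
      linarith
  have hxc : x + c ≠ 0 := by
    intro h
    rcases le_or_gt 0 x with e | e
    · have : t = x := by rw [htdef, abs_of_nonneg e]
      linarith
    · have : t = -x := by rw [htdef, abs_of_neg e]
      linarith
  have hxb' : x + b' ≠ 0 := by
    intro h
    rcases le_or_gt 0 x with e | e
    · have : t = x := by rw [htdef, abs_of_nonneg e]
      linarith
    · have : t = -x := by rw [htdef, abs_of_neg e]
      linarith
  have hxc' : x + c' ≠ 0 := by
    intro h
    rcases le_or_gt 0 x with e | e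
    · have : t = x := by rw [htdef, abs_of_nonneg e]
      linarith
    · have : t = -x := by rw [htdef, abs_of_neg e]
      linarith
  -- lower bounds on denominators
  have hPm : t^2 - t/2 - 9/16 ≤ (x+b)*(x+c) := by
    have k1 : (0:ℝ) ≤ (1/2 + (b+c)) * (t + x) := by
      apply mul_nonneg <;> linarith
    have k2 : (0:ℝ) ≤ (1/2 - (b+c)) * (t - x) := by
      apply mul_nonneg <;> linarith
    have k3 : (0:ℝ) ≤ (3/4 + b) * c := by apply mul_nonneg <;> linarith
    nlinarith
  have hPm' : t^2 - t/2 - 9/16 ≤ (x+b')*(x+c') := by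
    have k1 : (0:ℝ) ≤ (1/2 + (b'+c')) * (t + x) := by
      apply mul_nonneg <;> linarith
    have k2 : (0:ℝ) ≤ (1/2 - (b'+c')) * (t - x) := by
      apply mul_nonneg <;> linarith
    have k3 : (0:ℝ) ≤ (3/4 + b') * c' := by apply mul_nonneg <;> linarith
    nlinarith
  have hP : (0:ℝ) < (x+b)*(x+c) := lt_of_lt_of_le hm hPm
  have hP' : (0:ℝ) < (x+b')*(x+c') := lt_of_lt_of_le hm hPm'
  have hPne : (x+b)*(x+c) ≠ 0 := ne_of_gt hP
  have hPne' : (x+b')*(x+c') ≠ 0 := ne_of_gt hP'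
  -- rewrite fA
  have hfa : fA (a,b,c) x = a*(c-b)/((x+b)*(x+c)) := by
    simp only [fA]; field_simp; ring
  have hfa' : fA (a',b',c') x = a'*(c'-b')/((x+b')*(x+c')) := by
    simp only [fA]; field_simp; ring
  -- numerator bounds
  have habs_cb : |c - b| ≤ 3/2 := abs_le.mpr ⟨by linarith, by linarith⟩
  have habs_a' : |a'| ≤ 3/8 := abs_le.mpr ⟨by linarith, by linarith⟩
  have habs_b' : |b'| ≤ 3/4 := abs_le.mpr ⟨by linarith, by linarith⟩
  have habs_c : |c| ≤ 3/4 := abs_le.mpr ⟨by linarith, by linarith⟩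
  have db' : |b' - b| ≤ d := by rw [abs_sub_comm]; exact db
  have dc' : |c' - c| ≤ d := by rw [abs_sub_comm]; exact dc
  have hN1 : |a*(c-b) - a'*(c'-b')| ≤ 9/4 * d := by
    have e : a*(c-b) - a'*(c'-b') = (a-a')*(c-b) + (a'*(c-c') + a'*(b'-b)) := by ring
    have u1 := abs_add_le ((a-a')*(c-b)) (a'*(c-c') + a'*(b'-b))
    have u2 := abs_add_le (a'*(c-c')) (a'*(b'-b))
    have m1 : |(a-a')*(c-b)| ≤ d * (3/2) := by
      rw [abs_mul]; exact mul_le_mul da habs_cb (abs_nonneg _) hd0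
    have m2 : |a'*(c-c')| ≤ (3/8) * d := by
      rw [abs_mul]; exact mul_le_mul habs_a' dc (abs_nonneg _) (by norm_num)
    have m3 : |a'*(b'-b)| ≤ (3/8) * d := by
      rw [abs_mul]; exact mul_le_mul habs_a' db' (abs_nonneg _) (by norm_num)
    rw [e]; linarith
  have hN2 : |a'*(c'-b')| ≤ 9/16 := by
    rw [abs_mul]
    have : |c' - b'| ≤ 3/2 := abs_le.mpr ⟨by linarith, by linarith⟩
    calc |a'| * |c'-b'| ≤ (3/8)*(3/2) :=
          mul_le_mul habs_a' this (abs_nonneg _) (by norm_num)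
      _ = 9/16 := by norm_num
  have hN3 : |(x+b')*(x+c') - (x+b)*(x+c)| ≤ 2*d*t + 3/2*d := by
    have e : (x+b')*(x+c') - (x+b)*(x+c)
        = (b'-b)*x + ((c'-c)*x + (b'*(c'-c) + c*(b'-b))) := by ring
    have u1 := abs_add_le ((b'-b)*x) ((c'-c)*x + (b'*(c'-c) + c*(b'-b)))
    have u2 := abs_add_le ((c'-c)*x) (b'*(c'-c) + c*(b'-b))
    have u3 := abs_add_le (b'*(c'-c)) (c*(b'-b))
    have ht0 : (0:ℝ) ≤ t := by linarith
    have m1 : |(b'-b)*x| ≤ d * t := by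
      rw [abs_mul, ← htdef]; exact mul_le_mul db' (le_refl t) ht0 hd0
    have m2 : |(c'-c)*x| ≤ d * t := by
      rw [abs_mul, ← htdef]; exact mul_le_mul dc' (le_refl t) ht0 hd0
    have m3 : |b'*(c'-c)| ≤ (3/4) * d := by
      rw [abs_mul]; exact mul_le_mul habs_b' dc' (abs_nonneg _) (by norm_num)
    have m4 : |c*(b'-b)| ≤ (3/4) * d := by
      rw [abs_mul]; exact mul_le_mul habs_c db' (abs_nonneg _) (by norm_num)
    rw [e]; linarith
  -- main decomposition
  have decomp : a*(c-b)/((x+b)*(x+c)) - a'*(c'-b')/((x+b')*(x+c'))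
      = (a*(c-b) - a'*(c'-b'))/((x+b)*(x+c))
        + a'*(c'-b')*((x+b')*(x+c') - (x+b)*(x+c))/(((x+b)*(x+c))*((x+b')*(x+c'))) := by
    field_simp
    ring
  have scalar : 9/4/(t^2 - t/2 - 9/16) + 9/16*(2*t + 3/2)/(t^2 - t/2 - 9/16)^2
      ≤ 8/(x^2+1) := by
    rw [div_add_div _ _ (ne_of_gt hm) (by positivity),
      div_le_div_iff₀ (by positivity) (by positivity), hx2]
    nlinarith [sq_nonneg (t-2), sq_nonneg t, sq_nonneg (t*(t-2)), sq_nonneg (t^2 - 2*t),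
      mul_nonneg (mul_nonneg (by linarith : (0:ℝ) ≤ t) (by linarith : (0:ℝ) ≤ t)) (by linarith : (0:ℝ) ≤ t - 2)]
  have hdt : (0:ℝ) ≤ d * t := mul_nonneg hd0 (by linarith)
  have step1 : |a*(c-b) - a'*(c'-b')|/((x+b)*(x+c))
      ≤ (9/4*d)/(t^2 - t/2 - 9/16) :=
    div_le_div₀ (mul_nonneg (by norm_num) hd0) hN1 hm hPm
  have step2 : |a'*(c'-b')| * |(x+b')*(x+c') - (x+b)*(x+c)|/(((x+b)*(x+c))*((x+b')*(x+c')))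
      ≤ ((9/16)*(2*d*t + 3/2*d))/(t^2 - t/2 - 9/16)^2 := by
    apply div_le_div₀
    · nlinarith
    · exact mul_le_mul hN2 hN3 (abs_nonneg _) (by norm_num)
    · positivity
    · rw [sq]; exact mul_le_mul hPm hPm' (le_of_lt hm) (le_of_lt hP)
  calc |fA (a,b,c) x - fA (a',b',c') x|
      = |(a*(c-b) - a'*(c'-b'))/((x+b)*(x+c))
          + a'*(c'-b')*((x+b')*(x+c') - (x+b)*(x+c))/(((x+b)*(x+c))*((x+b')*(x+c')))| := by
        rw [hfa, hfa', decomp]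
    _ ≤ |(a*(c-b) - a'*(c'-b'))/((x+b)*(x+c))|
          + |a'*(c'-b')*((x+b')*(x+c') - (x+b)*(x+c))/(((x+b)*(x+c))*((x+b')*(x+c')))| :=
        abs_add_le _ _
    _ = |a*(c-b) - a'*(c'-b')|/((x+b)*(x+c))
          + |a'*(c'-b')| * |(x+b')*(x+c') - (x+b)*(x+c)|/(((x+b)*(x+c))*((x+b')*(x+c'))) := by
        rw [abs_div, abs_of_pos hP, abs_div, abs_mul (a'*(c'-b')),
          abs_of_pos (mul_pos hP hP')]
    _ ≤ (9/4*d)/(t^2 - t/2 - 9/16) + ((9/16)*(2*d*t + 3/2*d))/(t^2 - t/2 - 9/16)^2 :=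
        add_le_add step1 step2
    _ = d * (9/4/(t^2 - t/2 - 9/16) + 9/16*(2*t + 3/2)/(t^2 - t/2 - 9/16)^2) := by ring
    _ ≤ d * (8/(x^2+1)) := mul_le_mul_of_nonneg_left scalar hd0
    _ = 8 * d / (x^2+1) := by ring
end

section
/- Let ω : R_+ → (0,1] be decreasing with xω(x) ≥ δ for x ≥ 1 and ω(2x) ≥ δ ω(x) for x ≥ 0, extended evenly to R. Then there is a constant c(δ) such that for every integer m ≥ 0, the sum over integers s ≠ m of ω(|s|) / ( ω(m) (m^2+1) (s^2+1) |m-s| ) is at most c(δ). -/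
lemma aux_nat : Summable (fun n : ℕ => 1 / ((n : ℝ)^2 + 1)) := by
  have h2 : Summable (fun n : ℕ => 2 * (1 / (((n + 1 : ℕ) : ℝ))^2)) :=
    ((summable_nat_add_iff (f := fun n : ℕ => 1 / ((n : ℝ))^2) 1).2
      (Real.summable_one_div_nat_pow.2 one_lt_two)).mul_left 2
  apply h2.of_nonneg_of_le (fun n => by positivity)
  intro n
  have hn : (0:ℝ) ≤ (n:ℝ) := Nat.cast_nonneg n
  have h1 : (0:ℝ) < (n:ℝ)^2 + 1 := by positivity
  have h2' : (0:ℝ) < (((n+1:ℕ)):ℝ)^2 := by positivity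
  rw [div_le_iff₀ h1, mul_comm 2, mul_assoc, div_mul_eq_mul_div, le_div_iff₀ h2']
  push_cast
  nlinarith [sq_nonneg ((n:ℝ) - 1)]

lemma aux_summable : Summable (fun s : ℤ => 1 / ((s : ℝ)^2 + 1)) := by
  refine Summable.of_nat_of_neg ?_ ?_
  · refine aux_nat.congr fun n => ?_
    push_cast; ring
  · refine aux_nat.congr fun n => ?_
    push_cast; ring

theorem stmt6 (ω : ℝ → ℝ) (δ : ℝ) (hδ : 0 < δ)
    (hanti : AntitoneOn ω (Set.Ici 0))
    (hpos : ∀ x : ℝ, 0 ≤ x → 0 < ω x ∧ ω x ≤ 1)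
    (hlow : ∀ x : ℝ, 1 ≤ x → δ ≤ x * ω x)
    (hdbl : ∀ x : ℝ, 0 ≤ x → δ * ω x ≤ ω (2 * x)) :
    ∃ c : ℝ, ∀ m : ℕ,
      Summable (fun s : {s : ℤ // s ≠ (m : ℤ)} =>
        ω |(s : ℤ)| / (ω m * ((m : ℝ)^2 + 1) * (((s : ℤ) : ℝ)^2 + 1) * |(m : ℝ) - ((s : ℤ) : ℝ)|)) ∧
      ∑' s : {s : ℤ // s ≠ (m : ℤ)},
        ω |(s : ℤ)| / (ω m * ((m : ℝ)^2 + 1) * (((s : ℤ) : ℝ)^2 + 1) * |(m : ℝ) - ((s : ℤ) : ℝ)|)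
        ≤ c := by
  set A : ℝ := 1 + 1/δ with hA
  have hA1 : (1 : ℝ) ≤ A := by
    rw [hA]; have : 0 < 1/δ := by positivity
    linarith
  have hAδ : 1/δ ≤ A := by rw [hA]; linarith
  have hgsum : Summable (fun s : ℤ => A * (1 / ((s : ℝ)^2 + 1))) :=
    aux_summable.mul_left A
  refine ⟨A * ∑' s : ℤ, (1 / ((s : ℝ)^2 + 1)), fun m => ?_⟩
  -- basic facts
  have hωm : 0 < ω m := (hpos m (by positivity)).1
  have key : ∀ s : {s : ℤ // s ≠ (m : ℤ)},
      ω |(s : ℤ)| / (ω m * ((m : ℝ)^2 + 1) * (((s : ℤ) : ℝ)^2 + 1) * |(m : ℝ) - ((s : ℤ) : ℝ)|)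
        ≤ A * (1 / (((s : ℤ) : ℝ)^2 + 1)) := by
    rintro ⟨s, hs⟩
    dsimp only
    have habs : (1 : ℝ) ≤ |(m : ℝ) - (s : ℝ)| := by
      have h0 : ((m : ℤ) - s) ≠ 0 := sub_ne_zero.mpr (Ne.symm hs)
      have h1 : (1 : ℤ) ≤ |(m : ℤ) - s| := Int.one_le_abs h0
      calc (1:ℝ) ≤ (|(m : ℤ) - s| : ℤ) := by exact_mod_cast h1
        _ = |(m : ℝ) - (s : ℝ)| := by push_cast; ring
    have hωs_pos : 0 < ω |(s : ℝ)| := (hpos _ (abs_nonneg _)).1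
    have hωs_le : ω |(s : ℝ)| ≤ 1 := (hpos _ (abs_nonneg _)).2
    have hm1 : (1 : ℝ) ≤ (m : ℝ)^2 + 1 := by nlinarith [sq_nonneg ((m:ℝ))]
    have hs1 : (0 : ℝ) < (s : ℝ)^2 + 1 := by positivity
    -- main claim: ω|s| ≤ A * (ω m * (m²+1) * |m-s|)
    have main : ω |(s : ℝ)| ≤ A * (ω m * ((m : ℝ)^2 + 1) * |(m : ℝ) - (s : ℝ)|) := by
      rcases le_or_gt (m : ℝ) |(s : ℝ)| with hcase | hcase
      · -- antitone: ω|s| ≤ ω m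
        have h1 : ω |(s : ℝ)| ≤ ω m :=
          hanti (Set.mem_Ici.mpr (Nat.cast_nonneg m)) (Set.mem_Ici.mpr (abs_nonneg _)) hcase
        calc ω |(s : ℝ)| ≤ ω m := h1
          _ = 1 * (ω m * 1 * 1) := by ring
          _ ≤ A * (ω m * ((m : ℝ)^2 + 1) * |(m : ℝ) - (s : ℝ)|) := by
              apply mul_le_mul hA1 _ (by positivity) (by linarith)
              apply mul_le_mul (by nlinarith) habs (by norm_num) (by positivity)
      · -- |s| < m, so m ≥ 1
        have hm1' : (1 : ℝ) ≤ (m : ℝ) := by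
          have : (0 : ℝ) ≤ |(s : ℝ)| := abs_nonneg _
          have hmpos : (0 : ℝ) < (m : ℝ) := lt_of_le_of_lt this hcase
          have : 1 ≤ m := by exact_mod_cast hmpos
          exact_mod_cast this
        have hlm : δ ≤ (m : ℝ) * ω m := hlow m hm1'
        have h2 : δ ≤ ω m * ((m : ℝ)^2 + 1) * |(m : ℝ) - (s : ℝ)| := by
          have hmm : (m : ℝ) ≤ ((m : ℝ)^2 + 1) := by nlinarith
          calc δ ≤ (m : ℝ) * ω m := hlm
            _ ≤ ((m : ℝ)^2 + 1) * ω m := by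
                apply mul_le_mul_of_nonneg_right hmm hωm.le
            _ = ω m * ((m : ℝ)^2 + 1) * 1 := by ring
            _ ≤ ω m * ((m : ℝ)^2 + 1) * |(m : ℝ) - (s : ℝ)| := by
                apply mul_le_mul_of_nonneg_left habs (by positivity)
        calc ω |(s : ℝ)| ≤ 1 := hωs_le
          _ = (1/δ) * δ := by field_simp
          _ ≤ (1/δ) * (ω m * ((m : ℝ)^2 + 1) * |(m : ℝ) - (s : ℝ)|) := by
              apply mul_le_mul_of_nonneg_left h2 (by positivity)
          _ ≤ A * (ω m * ((m : ℝ)^2 + 1) * |(m : ℝ) - (s : ℝ)|) := by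
              apply mul_le_mul_of_nonneg_right hAδ (by positivity)
    have hD : 0 < ω m * ((m : ℝ)^2 + 1) * |(m : ℝ) - (s : ℝ)| := by
      have : (0:ℝ) < |(m : ℝ) - (s : ℝ)| := by linarith
      positivity
    rw [div_le_iff₀ (by positivity)]
    have hcast : ω |((s : ℤ) : ℝ)| = ω |(s : ℝ)| := rfl
    calc ω |(s : ℝ)| ≤ A * (ω m * ((m : ℝ)^2 + 1) * |(m : ℝ) - (s : ℝ)|) := main
      _ = A * (1 / ((s : ℝ)^2 + 1)) *
            (ω m * ((m : ℝ)^2 + 1) * ((s : ℝ)^2 + 1) * |(m : ℝ) - (s : ℝ)|) := by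
          field_simp
  have hnn : ∀ s : {s : ℤ // s ≠ (m : ℤ)},
      0 ≤ ω |(s : ℤ)| / (ω m * ((m : ℝ)^2 + 1) * (((s : ℤ) : ℝ)^2 + 1) * |(m : ℝ) - ((s : ℤ) : ℝ)|) := by
    rintro ⟨s, hs⟩
    have hωs_pos : 0 < ω |(s : ℝ)| := (hpos _ (abs_nonneg _)).1
    apply div_nonneg hωs_pos.le
    positivity
  have hgsub : Summable (fun s : {s : ℤ // s ≠ (m : ℤ)} => A * (1 / (((s : ℤ) : ℝ)^2 + 1))) :=
    hgsum.subtype _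
  have hsum : Summable (fun s : {s : ℤ // s ≠ (m : ℤ)} =>
      ω |(s : ℤ)| / (ω m * ((m : ℝ)^2 + 1) * (((s : ℤ) : ℝ)^2 + 1) * |(m : ℝ) - ((s : ℤ) : ℝ)|)) :=
    Summable.of_nonneg_of_le hnn key hgsub
  refine ⟨hsum, ?_⟩
  calc ∑' s : {s : ℤ // s ≠ (m : ℤ)},
        ω |(s : ℤ)| / (ω m * ((m : ℝ)^2 + 1) * (((s : ℤ) : ℝ)^2 + 1) * |(m : ℝ) - ((s : ℤ) : ℝ)|)
      ≤ ∑' s : {s : ℤ // s ≠ (m : ℤ)}, A * (1 / (((s : ℤ) : ℝ)^2 + 1)) :=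
        Summable.tsum_le_tsum key hsum hgsub
    _ ≤ ∑' s : ℤ, A * (1 / ((s : ℝ)^2 + 1)) := by
        apply Summable.tsum_subtype_le (fun s : ℤ => A * (1 / ((s : ℝ)^2 + 1)))
        · intro s; positivity
        · exact hgsum
    _ = A * ∑' s : ℤ, (1 / ((s : ℝ)^2 + 1)) := tsum_mul_left
end

section
/- Let T ≥ 3 be an integer and ω : R_+ → (0,1] decreasing with xω(x) ≥ δ for x ≥ 1 and ω(2x) ≥ δω(x). Then there is c(δ) so that for all integers m ≥ 0, Σ_{n ≥ 0, Tn ≠ m, |m - Tn| ≥ 1} ω(Tn) / ( ω(m)(m^2+1)(m-Tn)^2 ) ≤ c(δ). -/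
theorem stmt7 (T : ℕ) (hT : 3 ≤ T) (ω : ℝ → ℝ) (δ : ℝ) (hδ : 0 < δ)
    (hanti : AntitoneOn ω (Set.Ici 0))
    (hpos : ∀ x : ℝ, 0 ≤ x → 0 < ω x ∧ ω x ≤ 1)
    (hlow : ∀ x : ℝ, 1 ≤ x → δ ≤ x * ω x)
    (hdbl : ∀ x : ℝ, 0 ≤ x → δ * ω x ≤ ω (2 * x)) :
    ∃ c : ℝ, ∀ m : ℕ,
      Summable (fun n : {n : ℕ // (T * n : ℤ) ≠ (m : ℤ) ∧ 1 ≤ |(m : ℝ) - T * n|} =>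
        ω (T * (n : ℕ)) / (ω m * ((m : ℝ)^2 + 1) * ((m : ℝ) - T * (n : ℕ))^2)) ∧
      ∑' n : {n : ℕ // (T * n : ℤ) ≠ (m : ℤ) ∧ 1 ≤ |(m : ℝ) - T * n|},
        ω (T * (n : ℕ)) / (ω m * ((m : ℝ)^2 + 1) * ((m : ℝ) - T * (n : ℕ))^2) ≤ c := by
  classical
  set K : ℝ := max 1 δ⁻¹ with hK
  have hK1 : (1 : ℝ) ≤ K := le_max_left _ _
  have hKδ : δ⁻¹ ≤ K := le_max_right _ _
  have hK0 : (0 : ℝ) ≤ K := le_trans zero_le_one hK1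
  set g : ℤ → ℝ := fun k => K * (1 / (k : ℝ) ^ 2) with hg_def
  have hg : Summable g := ((Real.summable_one_div_int_pow).mpr one_lt_two).mul_left K
  have hg0 : ∀ k : ℤ, 0 ≤ g k := fun k => by positivity
  refine ⟨∑' k : ℤ, g k, fun m => ?_⟩
  set S := {n : ℕ // (T * n : ℤ) ≠ (m : ℤ) ∧ 1 ≤ |(m : ℝ) - T * n|}
  set f : S → ℝ := fun n =>
    ω (T * (n : ℕ)) / (ω m * ((m : ℝ)^2 + 1) * ((m : ℝ) - T * (n : ℕ))^2) with hf_def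
  set ι : S → ℤ := fun n => (m : ℤ) - T * (n : ℕ) with hι_def
  have hTpos : 0 < T := by omega
  have hι : Function.Injective ι := by
    intro a b hab
    have : (T : ℤ) * a = (T : ℤ) * b := by simp only [hι_def] at hab; omega
    have : (a : ℕ) = (b : ℕ) := by
      have hT' : (T : ℤ) ≠ 0 := by exact_mod_cast hTpos.ne'
      exact_mod_cast mul_left_cancel₀ hT' this
    exact Subtype.ext this
  -- basic positivity facts
  have hωm : 0 < ω m := (hpos m (by positivity)).1
  have hm2 : (0 : ℝ) < (m : ℝ) ^ 2 + 1 := by positivity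
  have key : ∀ n : S, 0 ≤ f n ∧ f n ≤ g (ι n) := by
    intro n
    have hTn0 : (0 : ℝ) ≤ (T * (n : ℕ) : ℕ) := by positivity
    have hcast : ((T * (n : ℕ) : ℕ) : ℝ) = (T : ℝ) * ((n : ℕ) : ℝ) := by push_cast; ring
    have hωTn : 0 < ω (T * (n : ℕ)) := by
      have := (hpos _ hTn0).1; rwa [hcast] at this
    have hωTn1 : ω ((T : ℝ) * ((n : ℕ) : ℝ)) ≤ 1 := by
      have := (hpos _ hTn0).2; rwa [hcast] at this
    have hD1 : (1 : ℝ) ≤ ((m : ℝ) - T * (n : ℕ)) ^ 2 := by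
      have h := n.2.2
      calc (1 : ℝ) = 1 ^ 2 := by ring
        _ ≤ |(m : ℝ) - T * (n : ℕ)| ^ 2 := by
            apply pow_le_pow_left₀ zero_le_one h 2
        _ = ((m : ℝ) - T * (n : ℕ)) ^ 2 := sq_abs _
    have hD0 : (0 : ℝ) < ((m : ℝ) - T * (n : ℕ)) ^ 2 := lt_of_lt_of_le one_pos hD1
    constructor
    · exact div_nonneg hωTn.le (by positivity)
    · -- main bound
      have hgι : g (ι n) = K * (1 / ((m : ℝ) - T * (n : ℕ)) ^ 2) := by
        simp only [hg_def, hι_def]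
        push_cast
        ring_nf
      rw [hgι, hf_def]
      have hnum : ω ((T : ℝ) * ((n : ℕ) : ℝ)) ≤ K * (ω m * ((m : ℝ) ^ 2 + 1)) := by
        rcases le_or_gt (m : ℝ) ((T : ℝ) * ((n : ℕ) : ℝ)) with hle | hlt
        · -- ω(Tn) ≤ ω m ≤ K * ω m * (m²+1)
          have h1 : ω ((T : ℝ) * ((n : ℕ) : ℝ)) ≤ ω m := by
            exact hanti (Set.mem_Ici.mpr (by positivity))
              (Set.mem_Ici.mpr (le_trans (by positivity) hle)) hle
          calc ω ((T : ℝ) * ((n : ℕ) : ℝ)) ≤ ω m := h1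
            _ = 1 * (ω m * 1) := by ring
            _ ≤ K * (ω m * ((m : ℝ) ^ 2 + 1)) := by
                apply mul_le_mul hK1 _ (by positivity) hK0
                apply mul_le_mul_of_nonneg_left _ hωm.le
                nlinarith [sq_nonneg (m : ℝ)]
        · -- Tn < m, so m ≥ 1
          have hm1 : (1 : ℝ) ≤ (m : ℝ) := by
            have : ((n : ℕ) : ℝ) * T ≥ 0 := by positivity
            have hmpos : (0 : ℝ) < (m : ℝ) := lt_of_le_of_lt (by positivity) hlt
            have : 0 < m := by exact_mod_cast hmpos
            exact_mod_cast this
          have hlo : δ ≤ (m : ℝ) * ω m := hlow m hm1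
          have hstep : δ ≤ ω m * ((m : ℝ) ^ 2 + 1) := by
            nlinarith [hωm.le, sq_nonneg ((m : ℝ) - 1)]
          calc ω ((T : ℝ) * ((n : ℕ) : ℝ)) ≤ 1 := hωTn1
            _ = δ⁻¹ * δ := by field_simp
            _ ≤ K * (ω m * ((m : ℝ) ^ 2 + 1)) :=
                mul_le_mul hKδ hstep hδ.le hK0
      rw [div_le_iff₀ (by positivity)]
      have heq : K * (1 / ((m : ℝ) - T * (n : ℕ)) ^ 2) *
          (ω m * ((m : ℝ) ^ 2 + 1) * ((m : ℝ) - T * (n : ℕ)) ^ 2)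
          = K * (ω m * ((m : ℝ) ^ 2 + 1)) := by
        rw [one_div, mul_assoc K, mul_comm (((m : ℝ) - T * (n : ℕ)) ^ 2)⁻¹,
          mul_inv_cancel_right₀ hD0.ne']
      rw [heq]; exact hnum
  have hgι_summable : Summable (g ∘ ι) := hg.comp_injective hι
  have hf_summable : Summable f :=
    Summable.of_nonneg_of_le (fun n => (key n).1) (fun n => (key n).2) hgι_summable
  refine ⟨hf_summable, ?_⟩
  exact Summable.tsum_le_tsum_of_inj ι hι (fun c _ => hg0 c) (fun n => (key n).2) hf_summable hg
end

section
/- Let Q ⊂ R be a separated set with counting function n_Q satisfying |n_Q(t) - Ct| ≤ M(1 + |t|^{2/3}) for some constants C, M > 0. Then the Beurling–Malliavin density of Q equals C. In particular, for any d > C, there is no sequence of disjoint intervals I_n = (a_n, b_n) with |I_n| → ∞, Σ_n |I_n|^2/(1 + dist(0, I_n)^2) = ∞, and card(Q ∩ I_n) > d|I_n| for all n. -/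
open Filter

/-- Counting function of a set `Q ⊆ ℝ`. -/
noncomputable def nQ (Q : Set ℝ) (t : ℝ) : ℤ :=
  if 0 ≤ t then ((Q ∩ Set.Ico 0 t).ncard : ℤ) else -((Q ∩ Set.Ioo t 0).ncard : ℤ)

/-- `Q` is separated: distinct points are at distance bounded below. -/
def Separated (Q : Set ℝ) : Prop :=
  ∃ ε > 0, ∀ x ∈ Q, ∀ y ∈ Q, x ≠ y → ε ≤ |x - y|

/-- There is a long sequence of disjoint intervals `I_n = (a_n, b_n)` (lengths tending
to `∞` and `Σ |I_n|²/(1 + dist(0, I_n)²) = ∞`) with `card(Q ∩ I_n) > d |I_n|`. -/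
def BMWitness (Q : Set ℝ) (d : ℝ) : Prop :=
  ∃ a b : ℕ → ℝ, (∀ n, a n < b n) ∧
    (Pairwise fun n m => Disjoint (Set.Ioo (a n) (b n)) (Set.Ioo (a m) (b m))) ∧
    Tendsto (fun n => b n - a n) atTop atTop ∧
    ¬ Summable (fun n => (b n - a n)^2 / (1 + (Metric.infDist 0 (Set.Ioo (a n) (b n)))^2)) ∧
    ∀ n, d * (b n - a n) < ((Q ∩ Set.Ioo (a n) (b n)).ncard : ℝ)

/-- The Beurling–Malliavin density of `Q`. -/
noncomputable def DBM (Q : Set ℝ) : ℝ := sSup {d : ℝ | BMWitness Q d}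

open Set MeasureTheory Metric

lemma sep_inter_finite {Q : Set ℝ} (hsep : Separated Q) {s : Set ℝ}
    (hs : Bornology.IsBounded s) : (Q ∩ s).Finite := by
  obtain ⟨ε, hε, hQ⟩ := hsep
  obtain ⟨R, hR⟩ := hs.subset_closedBall 0
  refine Set.Finite.of_finite_image (f := fun x => ⌊x / ε⌋) ?_ ?_
  · apply Set.Finite.subset (Set.finite_Icc ⌊(-R) / ε⌋ ⌊R / ε⌋)
    rintro _ ⟨x, ⟨_, hxs⟩, rfl⟩
    have h1 : |x| ≤ R := by
      have := hR hxs
      rwa [Metric.mem_closedBall, Real.dist_eq, sub_zero] at this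
    rw [abs_le] at h1
    constructor
    · exact Int.floor_le_floor (div_le_div_of_nonneg_right h1.1 hε.le)
    · exact Int.floor_le_floor (div_le_div_of_nonneg_right h1.2 hε.le)
  · intro x hx y hy hxy
    by_contra hne
    have h1 := hQ x hx.1 y hy.1 hne
    have h2 : |x / ε - y / ε| < 1 := Int.abs_sub_lt_one_of_floor_eq_floor hxy
    rw [div_sub_div_same, abs_div, abs_of_pos hε, div_lt_one hε] at h2
    linarith

lemma nQ_of_nonneg {Q : Set ℝ} {t : ℝ} (ht : 0 ≤ t) :
    nQ Q t = ((Q ∩ Set.Ico 0 t).ncard : ℤ) := if_pos ht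

lemma nQ_of_nonpos {Q : Set ℝ} {t : ℝ} (ht : t ≤ 0) :
    nQ Q t = -((Q ∩ Set.Ioo t 0).ncard : ℤ) := by
  rcases eq_or_lt_of_le ht with h | h
  · subst h; simp [nQ]
  · exact if_neg (not_le.2 h)

section Counting
variable {Q : Set ℝ} (hfin : ∀ s : Set ℝ, Bornology.IsBounded s → (Q ∩ s).Finite)
include hfin

lemma nQ_sub_eq {a b : ℝ} (ha : 0 ≤ a) (hab : a ≤ b) :
    nQ Q b - nQ Q a = ((Q ∩ Set.Ico a b).ncard : ℤ) := by
  rw [nQ_of_nonneg ha, nQ_of_nonneg (ha.trans hab)]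
  have hsplit : Q ∩ Set.Ico 0 b = (Q ∩ Set.Ico 0 a) ∪ (Q ∩ Set.Ico a b) := by
    rw [← Set.inter_union_distrib_left, Set.Ico_union_Ico_eq_Ico ha hab]
  rw [hsplit, Set.ncard_union_eq ?_ (hfin _ (Metric.isBounded_Ico _ _))
    (hfin _ (Metric.isBounded_Ico _ _))]
  · push_cast; ring
  · refine Disjoint.mono Set.inter_subset_right Set.inter_subset_right ?_
    rw [Set.disjoint_left]
    rintro x ⟨_, hx⟩ ⟨hx', _⟩
    exact absurd hx' (not_le.2 hx)

lemma card_Ioo_le {a b : ℝ} (hab : a < b) :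
    ((Q ∩ Set.Ioo a b).ncard : ℤ) ≤ nQ Q b - nQ Q a := by
  rcases le_or_gt 0 a with ha | ha
  · rw [nQ_sub_eq hfin ha hab.le]
    exact_mod_cast Set.ncard_le_ncard (Set.inter_subset_inter_right _ Set.Ioo_subset_Ico_self)
      (hfin _ (Metric.isBounded_Ico _ _))
  rcases le_or_gt b 0 with hb | hb
  · rw [nQ_of_nonpos (hab.le.trans hb), nQ_of_nonpos hb]
    have hsplit : Q ∩ Set.Ioo a 0 = (Q ∩ Set.Ioo a b) ∪ (Q ∩ Set.Ico b 0) := by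
      rw [← Set.inter_union_distrib_left, Set.Ioo_union_Ico_eq_Ioo hab hb]
    have hdis : Disjoint (Q ∩ Set.Ioo a b) (Q ∩ Set.Ico b 0) := by
      refine Disjoint.mono Set.inter_subset_right Set.inter_subset_right ?_
      rw [Set.disjoint_left]
      rintro x ⟨_, hx⟩ ⟨hx', _⟩
      exact absurd hx' (not_le.2 hx)
    have hmono : (Q ∩ Set.Ioo b 0).ncard ≤ (Q ∩ Set.Ico b 0).ncard :=
      Set.ncard_le_ncard (Set.inter_subset_inter_right _ Set.Ioo_subset_Ico_self)
        (hfin _ (Metric.isBounded_Ico _ _))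
    rw [hsplit, Set.ncard_union_eq hdis (hfin _ (Metric.isBounded_Ioo _ _))
      (hfin _ (Metric.isBounded_Ico _ _))]
    push_cast
    push_cast at hmono
    linarith
  · -- a < 0 < b
    rw [nQ_of_nonneg hb.le, nQ_of_nonpos ha.le]
    have hsplit : Q ∩ Set.Ioo a b = (Q ∩ Set.Ioo a 0) ∪ (Q ∩ Set.Ico 0 b) := by
      rw [← Set.inter_union_distrib_left, Set.Ioo_union_Ico_eq_Ioo ha hb.le]
    rw [hsplit, Set.ncard_union_eq ?_ (hfin _ (Metric.isBounded_Ioo _ _)) (hfin _ (Metric.isBounded_Ico _ _))]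
    · push_cast; ring_nf; exact le_refl _
    · refine Disjoint.mono Set.inter_subset_right Set.inter_subset_right ?_
      rw [Set.disjoint_left]
      rintro x ⟨_, hx0⟩ ⟨hx0', _⟩
      exact absurd hx0' (not_le.2 hx0)

end Counting

section Counting2
variable {Q : Set ℝ} (hfin : ∀ s : Set ℝ, Bornology.IsBounded s → (Q ∩ s).Finite)
include hfin

lemma le_card_Ioo {a b : ℝ} (ha : 0 ≤ a) (hab : a ≤ b) :
    nQ Q b - nQ Q a ≤ ((Q ∩ Set.Ioo a b).ncard : ℤ) + 1 := by
  rw [nQ_sub_eq hfin ha hab]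
  have hsub : Q ∩ Set.Ico a b ⊆ (Q ∩ Set.Ioo a b) ∪ {a} := by
    rintro x ⟨hxQ, hxa, hxb⟩
    rcases eq_or_lt_of_le hxa with h | h
    · exact Or.inr (by simp [h.symm])
    · exact Or.inl ⟨hxQ, h, hxb⟩
  have h1 : (Q ∩ Set.Ico a b).ncard ≤ ((Q ∩ Set.Ioo a b) ∪ {a}).ncard :=
    Set.ncard_le_ncard hsub ((hfin _ (Metric.isBounded_Ioo _ _)).union (Set.finite_singleton _))
  have h2 : ((Q ∩ Set.Ioo a b) ∪ {a}).ncard ≤ (Q ∩ Set.Ioo a b).ncard + ({a} : Set ℝ).ncard :=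
    Set.ncard_union_le _ _
  rw [Set.ncard_singleton] at h2
  push_cast
  exact_mod_cast h1.trans h2

end Counting2

lemma infDist_Ioo_of_nonneg {a b : ℝ} (hab : a < b) (ha : 0 ≤ a) :
    Metric.infDist 0 (Set.Ioo a b) = a := by
  rw [← Metric.infDist_closure, closure_Ioo hab.ne]
  refine le_antisymm ?_ ?_
  · have h := Metric.infDist_le_dist_of_mem (x := (0:ℝ)) (Set.left_mem_Icc.2 hab.le)
    rwa [Real.dist_eq, zero_sub, abs_neg, abs_of_nonneg ha] at h
  · rw [Metric.infDist_eq_iInf]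
    have : Nonempty (Set.Icc a b) := ⟨⟨a, Set.left_mem_Icc.2 hab.le⟩⟩
    refine le_ciInf fun y => ?_
    rw [Real.dist_eq, zero_sub, abs_neg, abs_of_nonneg (ha.trans y.2.1)]
    exact y.2.1

lemma infDist_Ioo_of_nonpos {a b : ℝ} (hab : a < b) (hb : b ≤ 0) :
    Metric.infDist 0 (Set.Ioo a b) = -b := by
  rw [← Metric.infDist_closure, closure_Ioo hab.ne]
  refine le_antisymm ?_ ?_
  · have h := Metric.infDist_le_dist_of_mem (x := (0:ℝ)) (Set.right_mem_Icc.2 hab.le)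
    rwa [Real.dist_eq, zero_sub, abs_neg, abs_of_nonpos hb] at h
  · rw [Metric.infDist_eq_iInf]
    have : Nonempty (Set.Icc a b) := ⟨⟨a, Set.left_mem_Icc.2 hab.le⟩⟩
    refine le_ciInf fun y => ?_
    rw [Real.dist_eq, zero_sub, abs_neg, abs_of_nonpos (y.2.2.trans hb)]
    linarith [y.2.2]

lemma abs_le_infDist_add {a b : ℝ} (hab : a < b) :
    |a| ≤ Metric.infDist 0 (Set.Ioo a b) + (b - a) ∧
    |b| ≤ Metric.infDist 0 (Set.Ioo a b) + (b - a) := by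
  rcases le_or_gt 0 a with ha | ha
  · rw [infDist_Ioo_of_nonneg hab ha, abs_of_nonneg ha,
      abs_of_nonneg (ha.trans hab.le)]
    constructor <;> linarith
  rcases le_or_gt b 0 with hb | hb
  · rw [infDist_Ioo_of_nonpos hab hb, abs_of_nonpos ha.le, abs_of_nonpos hb]
    constructor <;> linarith
  · have h0 := Metric.infDist_nonneg (x := (0:ℝ)) (s := Set.Ioo a b)
    rw [abs_of_nonpos ha.le, abs_of_nonneg hb.le]
    constructor <;> linarith

section RealBounds
variable {Q : Set ℝ} {C M : ℝ}
  (hfin : ∀ s : Set ℝ, Bornology.IsBounded s → (Q ∩ s).Finite)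
  (hcount : ∀ t : ℝ, |(nQ Q t : ℝ) - C * t| ≤ M * (1 + |t| ^ ((2 : ℝ)/3)))
include hfin hcount

lemma card_real_upper {a b : ℝ} (hab : a < b) :
    ((Q ∩ Set.Ioo a b).ncard : ℝ) ≤
      C * (b - a) + M * (2 + |a| ^ ((2:ℝ)/3) + |b| ^ ((2:ℝ)/3)) := by
  have hu := card_Ioo_le hfin hab
  have hu' : ((Q ∩ Set.Ioo a b).ncard : ℝ) ≤ (nQ Q b : ℝ) - (nQ Q a : ℝ) := by
    exact_mod_cast hu
  have hca := abs_le.1 (hcount a)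
  have hcb := abs_le.1 (hcount b)
  nlinarith [hca.1, hca.2, hcb.1, hcb.2]

lemma card_real_lower {a b : ℝ} (ha : 0 ≤ a) (hab : a < b) :
    C * (b - a) - M * (2 + |a| ^ ((2:ℝ)/3) + |b| ^ ((2:ℝ)/3)) - 1 ≤
      ((Q ∩ Set.Ioo a b).ncard : ℝ) := by
  have hl := le_card_Ioo hfin ha hab.le
  have hl' : (nQ Q b : ℝ) - (nQ Q a : ℝ) ≤ ((Q ∩ Set.Ioo a b).ncard : ℝ) + 1 := by
    exact_mod_cast hl
  have hca := abs_le.1 (hcount a)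
  have hcb := abs_le.1 (hcount b)
  nlinarith [hca.1, hca.2, hcb.1, hcb.2]

end RealBounds

lemma Ioo_disjoint_of_le {a₁ b₁ a₂ b₂ : ℝ} (h : b₁ ≤ a₂) :
    Disjoint (Set.Ioo a₁ b₁) (Set.Ioo a₂ b₂) := by
  rw [Set.disjoint_left]
  rintro x ⟨_, hx1⟩ ⟨hx2, _⟩
  linarith

lemma witness_exists {Q : Set ℝ} {C M : ℝ}
    (hfin : ∀ s : Set ℝ, Bornology.IsBounded s → (Q ∩ s).Finite)
    (hcount : ∀ t : ℝ, |(nQ Q t : ℝ) - C * t| ≤ M * (1 + |t| ^ ((2 : ℝ)/3)))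
    (hM : 0 < M) {d : ℝ} (hd : d < C) : BMWitness Q d := by
  -- choose N
  have h1 : Tendsto (fun n : ℕ => (2:ℝ)^n) atTop atTop :=
    tendsto_pow_atTop_atTop_of_one_lt one_lt_two
  have h2 : Tendsto (fun n : ℕ => ((2:ℝ)^n) ^ ((1:ℝ)/3)) atTop atTop :=
    (tendsto_rpow_atTop (by norm_num)).comp h1
  have h3 : Tendsto (fun n : ℕ => (C - d) * ((2:ℝ)^n) ^ ((1:ℝ)/3)) atTop atTop :=
    h2.const_mul_atTop (by linarith)
  obtain ⟨N, hN⟩ := eventually_atTop.1 (h3.eventually_ge_atTop (5*M + 2))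
  set a : ℕ → ℝ := fun n => 2^(n+N) with ha_def
  set b : ℕ → ℝ := fun n => 2^(n+N+1) with hb_def
  have hA0 : ∀ n, (0:ℝ) < a n := fun n => by positivity
  have hA1 : ∀ n, (1:ℝ) ≤ a n := fun n => one_le_pow₀ one_le_two
  have hdiff : ∀ n, b n - a n = a n := fun n => by
    show (2:ℝ)^(n+N+1) - 2^(n+N) = 2^(n+N); rw [pow_succ]; ring
  have hab : ∀ n, a n < b n := fun n => by
    have := hA0 n
    have : b n - a n = a n := hdiff n
    linarith
  -- key numeric inequality
  have hkey : ∀ n, d * a n < C * a n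
      - M * (2 + |a n| ^ ((2:ℝ)/3) + |b n| ^ ((2:ℝ)/3)) - 1 := by
    intro n
    have hA0n := hA0 n
    have hA1n := hA1 n
    have hNn := hN (n+N) (Nat.le_add_left N n)
    have hsplit : (C - d) * a n = ((C - d) * (a n) ^ ((1:ℝ)/3)) * (a n) ^ ((2:ℝ)/3) := by
      rw [mul_assoc, ← Real.rpow_add hA0n]
      norm_num
    have hA23 : (1:ℝ) ≤ (a n) ^ ((2:ℝ)/3) := by
      calc (1:ℝ) = (1:ℝ) ^ ((2:ℝ)/3) := (Real.one_rpow _).symm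
      _ ≤ (a n) ^ ((2:ℝ)/3) := Real.rpow_le_rpow zero_le_one hA1n (by norm_num)
    have hb2 : |b n| ^ ((2:ℝ)/3) ≤ 2 * |a n| ^ ((2:ℝ)/3) := by
      have hbn : b n = 2 * a n := by
        show (2:ℝ)^(n+N+1) = 2 * 2^(n+N); rw [pow_succ]; ring
      rw [hbn, abs_of_pos (by linarith), abs_of_pos hA0n,
        Real.mul_rpow (by norm_num) hA0n.le]
      have h22 : (2:ℝ) ^ ((2:ℝ)/3) ≤ 2 := by
        calc (2:ℝ) ^ ((2:ℝ)/3) ≤ (2:ℝ) ^ ((1:ℝ)) :=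
          Real.rpow_le_rpow_of_exponent_le one_le_two (by norm_num)
        _ = 2 := Real.rpow_one 2
      exact mul_le_mul_of_nonneg_right h22 (Real.rpow_nonneg hA0n.le _)
    have habs : |a n| ^ ((2:ℝ)/3) = (a n) ^ ((2:ℝ)/3) := by rw [abs_of_pos hA0n]
    have hbig : (5*M + 2) * (a n) ^ ((2:ℝ)/3) ≤ (C - d) * a n := by
      rw [hsplit]
      exact mul_le_mul_of_nonneg_right hNn (Real.rpow_nonneg hA0n.le _)
    rw [habs] at hb2 ⊢
    nlinarith
  refine ⟨a, b, hab, ?_, ?_, ?_, ?_⟩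
  · -- pairwise disjoint
    have hmono : ∀ {n m : ℕ}, n < m → b n ≤ a m := by
      intro n m hnm
      exact pow_le_pow_right₀ one_le_two (by omega)
    intro n m hnm
    rcases lt_or_gt_of_ne hnm with h | h
    · exact Ioo_disjoint_of_le (hmono h)
    · exact (Ioo_disjoint_of_le (hmono h)).symm
  · -- tendsto
    simp only [hdiff]
    exact h1.comp (tendsto_add_atTop_nat N)
  · -- not summable
    intro hsum
    have hid : ∀ n, Metric.infDist 0 (Set.Ioo (a n) (b n)) = a n := fun n =>
      infDist_Ioo_of_nonneg (hab n) (hA0 n).le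
    have hhalf : ∀ n, (1:ℝ)/2 ≤ (b n - a n)^2 / (1 + (Metric.infDist 0 (Set.Ioo (a n) (b n)))^2) := by
      intro n
      rw [hid, hdiff]
      have h1n := hA1 n
      rw [le_div_iff₀ (by positivity)]
      nlinarith
    have h0 := hsum.tendsto_atTop_zero
    obtain ⟨n, hn⟩ := (h0.eventually (gt_mem_nhds (show (0:ℝ) < 1/2 by norm_num))).exists
    exact (hhalf n).not_gt hn
  · -- counting
    intro n
    have hlow := card_real_lower hfin hcount (hA0 n).le (hab n)
    have := hkey n
    rw [hdiff n] at hlow ⊢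
    linarith

lemma integrable_f : IntegrableOn (fun x : ℝ => |x| ^ (-(4:ℝ)/3)) {x : ℝ | 1 ≤ |x|} := by
  have hpos : IntegrableOn (fun x : ℝ => |x| ^ (-(4:ℝ)/3)) (Set.Ici (1:ℝ)) := by
    have heq : Set.EqOn (fun x : ℝ => |x| ^ (-(4:ℝ)/3)) (fun x : ℝ => x ^ (-(4:ℝ)/3))
        (Set.Ici (1:ℝ)) := fun x hx => by
      simp only [abs_of_pos (lt_of_lt_of_le one_pos (Set.mem_Ici.1 hx))]
    rw [integrableOn_congr_fun heq measurableSet_Ici]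
    exact (integrableOn_Ici_iff_integrableOn_Ioi (f := fun x : ℝ => x ^ (-(4:ℝ)/3)) (b := 1)).2
      (integrableOn_Ioi_rpow_of_lt (by norm_num) one_pos)
  have hset : {x : ℝ | 1 ≤ |x|} = Set.Iic (-1:ℝ) ∪ Set.Ici (1:ℝ) := by
    ext x
    simp only [Set.mem_setOf_eq, Set.mem_union, Set.mem_Iic, Set.mem_Ici, le_abs]
    constructor
    · rintro (h | h)
      · exact Or.inr h
      · exact Or.inl (by linarith)
    · rintro (h | h)
      · exact Or.inr (by linarith)
      · exact Or.inl h
  rw [hset, integrableOn_union]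
  refine ⟨?_, hpos⟩
  rw [← (Measure.measurePreserving_neg (volume : Measure ℝ)).integrableOn_comp_preimage
    (Homeomorph.neg ℝ).measurableEmbedding]
  have : (Neg.neg ⁻¹' Set.Iic (-1 : ℝ)) = Set.Ici (1:ℝ) := by
    ext x; simp only [Set.mem_preimage, Set.mem_Iic, Set.mem_Ici]; constructor <;> intro <;> linarith
  rw [this]
  simpa only [Function.comp_def, abs_neg] using hpos

set_option maxHeartbeats 1000000 in
lemma no_witness {Q : Set ℝ} {C M : ℝ}
    (hfin : ∀ s : Set ℝ, Bornology.IsBounded s → (Q ∩ s).Finite)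
    (hcount : ∀ t : ℝ, |(nQ Q t : ℝ) - C * t| ≤ M * (1 + |t| ^ ((2 : ℝ)/3)))
    (hM : 0 < M) {d : ℝ} (hd : C < d) : ¬ BMWitness Q d := by
  rintro ⟨a, b, hab, hdis, htend, hnsum, hcard⟩
  apply hnsum
  set L : ℕ → ℝ := fun n => b n - a n with hL_def
  set t : ℕ → ℝ := fun n => Metric.infDist 0 (Set.Ioo (a n) (b n)) with ht_def
  have hL0 : ∀ n, 0 < L n := fun n => sub_pos.2 (hab n)
  have ht0 : ∀ n, 0 ≤ t n := fun n => Metric.infDist_nonneg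
  have hdC : 0 < d - C := by linarith
  have habs' : ∀ n, |a n| ≤ t n + L n ∧ |b n| ≤ t n + L n :=
    fun n => abs_le_infDist_add (hab n)
  have ht_le : ∀ n, ∀ x ∈ Set.Ioo (a n) (b n), t n ≤ |x| := by
    intro n x hx
    have h1 : Metric.infDist 0 (Set.Ioo (a n) (b n)) ≤ dist 0 x :=
      Metric.infDist_le_dist_of_mem hx
    rwa [Real.dist_eq, zero_sub, abs_neg] at h1
  have hvol : ∀ n, (volume (Set.Ioo (a n) (b n))).toReal = L n := by
    intro n
    rw [Real.volume_Ioo, ENNReal.toReal_ofReal (hL0 n).le]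
  have hcard' : ∀ n, d * L n < ((Q ∩ Set.Ioo (a n) (b n)).ncard : ℝ) := hcard
  have hups : ∀ n, ((Q ∩ Set.Ioo (a n) (b n)).ncard : ℝ) ≤
      C * L n + M * (2 + |a n| ^ ((2:ℝ)/3) + |b n| ^ ((2:ℝ)/3)) :=
    fun n => card_real_upper hfin hcount (hab n)
  show Summable (fun n => (L n)^2 / (1 + (t n)^2))
  clear hnsum hcard
  clear_value L t
  -- basic estimate
  have hest : ∀ n, (d - C) * L n ≤ M * (2 + 2 * (t n + L n) ^ ((2:ℝ)/3)) := by
    intro n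
    have hup := hups n
    have hc := hcard' n
    have h1 : |a n| ^ ((2:ℝ)/3) ≤ (t n + L n) ^ ((2:ℝ)/3) :=
      Real.rpow_le_rpow (abs_nonneg _) (habs' n).1 (by norm_num)
    have h2 : |b n| ^ ((2:ℝ)/3) ≤ (t n + L n) ^ ((2:ℝ)/3) :=
      Real.rpow_le_rpow (abs_nonneg _) (habs' n).2 (by norm_num)
    nlinarith [mul_le_mul_of_nonneg_left h1 hM.le, mul_le_mul_of_nonneg_left h2 hM.le]
  -- choose threshold B
  set x0 : ℝ := 7 * M / (d - C) with hx0_def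
  have hx0 : 0 ≤ x0 := by positivity
  set B : ℝ := max 1 (x0 ^ 3) with hB_def
  have hB1 : (1:ℝ) ≤ B := le_max_left _ _
  have hB13 : 7 * M ≤ (d - C) * B ^ ((1:ℝ)/3) := by
    have h1 : x0 ≤ B ^ ((1:ℝ)/3) := by
      have h2 : (x0 ^ 3 : ℝ) ^ ((1:ℝ)/3) ≤ B ^ ((1:ℝ)/3) :=
        Real.rpow_le_rpow (by positivity) (le_max_right _ _) (by norm_num)
      rwa [← Real.rpow_natCast x0 3, ← Real.rpow_mul hx0,
        show ((3:ℕ):ℝ) * (1/3) = 1 by norm_num, Real.rpow_one] at h2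
    calc 7 * M = (d - C) * x0 := by rw [hx0_def]; field_simp
    _ ≤ (d - C) * B ^ ((1:ℝ)/3) := mul_le_mul_of_nonneg_left h1 hdC.le
  -- if L is large then L ≤ t
  have hclaim : ∀ n, B ≤ L n → L n ≤ t n := by
    intro n hBn
    by_contra hlt
    push_neg at hlt
    have hL1 : (1:ℝ) ≤ L n := hB1.trans hBn
    have hL23pos : (0:ℝ) < (L n) ^ ((2:ℝ)/3) := Real.rpow_pos_of_pos (hL0 n) _
    have hL23one : (1:ℝ) ≤ (L n) ^ ((2:ℝ)/3) := by
      calc (1:ℝ) = (1:ℝ) ^ ((2:ℝ)/3) := (Real.one_rpow _).symm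
      _ ≤ (L n) ^ ((2:ℝ)/3) := Real.rpow_le_rpow zero_le_one hL1 (by norm_num)
    have h1 : (t n + L n) ^ ((2:ℝ)/3) ≤ (2 * L n) ^ ((2:ℝ)/3) :=
      Real.rpow_le_rpow (by linarith [ht0 n]) (by linarith) (by norm_num)
    have h2 : (2 * L n) ^ ((2:ℝ)/3) ≤ 2 * (L n) ^ ((2:ℝ)/3) := by
      rw [Real.mul_rpow (by norm_num) (hL0 n).le]
      have h22 : (2:ℝ) ^ ((2:ℝ)/3) ≤ 2 := by
        calc (2:ℝ) ^ ((2:ℝ)/3) ≤ (2:ℝ) ^ ((1:ℝ)) :=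
          Real.rpow_le_rpow_of_exponent_le one_le_two (by norm_num)
        _ = 2 := Real.rpow_one 2
      nlinarith
    have hup : (d - C) * L n ≤ 6 * M * (L n) ^ ((2:ℝ)/3) := by
      have := hest n
      nlinarith
    have hlow : 7 * M * (L n) ^ ((2:ℝ)/3) ≤ (d - C) * L n := by
      have hsplit : (d - C) * L n = ((d - C) * (L n) ^ ((1:ℝ)/3)) * (L n) ^ ((2:ℝ)/3) := by
        rw [mul_assoc, ← Real.rpow_add (hL0 n)]
        norm_num
      have h13 : B ^ ((1:ℝ)/3) ≤ (L n) ^ ((1:ℝ)/3) :=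
        Real.rpow_le_rpow (by linarith) hBn (by norm_num)
      rw [hsplit]
      have : 7 * M ≤ (d - C) * (L n) ^ ((1:ℝ)/3) := hB13.trans (by nlinarith)
      nlinarith
    nlinarith
  -- choose N
  obtain ⟨N, hN⟩ := eventually_atTop.1 (htend.eventually_ge_atTop B)
  have hNB : ∀ n, B ≤ L (n + N) := fun n => hN (n + N) (Nat.le_add_left N n)
  have hLt : ∀ n, L (n + N) ≤ t (n + N) := fun n => hclaim _ (hNB n)
  have htB : ∀ n, B ≤ t (n + N) := fun n => (hNB n).trans (hLt n)
  have ht1 : ∀ n, (1:ℝ) ≤ t (n + N) := fun n => hB1.trans (htB n)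
  have htpos : ∀ n, (0:ℝ) < t (n + N) := fun n => lt_of_lt_of_le one_pos (ht1 n)
  set p : ℝ := -(4:ℝ)/3 with hp_def
  set f : ℝ → ℝ := fun x => |x| ^ p with hf_def
  -- each tail interval lies in {x | 1 ≤ |x|}
  have hsub : ∀ n, Set.Ioo (a (n + N)) (b (n + N)) ⊆ {x : ℝ | 1 ≤ |x|} :=
    fun n x hx => (ht1 n).trans (ht_le (n + N) x hx)
  -- integral lower bound
  have hint : ∀ n, (2 * t (n + N)) ^ p * L (n + N) ≤
      ∫ x in Set.Ioo (a (n + N)) (b (n + N)), f x := by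
    intro n
    rw [← hvol (n + N)]
    refine setIntegral_ge_of_const_le_real measurableSet_Ioo ?_ ?_ ?_
    · rw [Real.volume_Ioo]; exact ENNReal.ofReal_ne_top
    · intro x hx
      have hx1 : 1 ≤ |x| := hsub n hx
      have hxu : |x| ≤ 2 * t (n + N) := by
        have h2 : |x| ≤ max |a (n + N)| |b (n + N)| :=
          abs_le_max_abs_abs hx.1.le hx.2.le
        have h4 := (habs' (n + N)).1
        have h5 := (habs' (n + N)).2
        have h6 := hLt n
        rcases max_cases |a (n + N)| |b (n + N)| with ⟨h3, _⟩ | ⟨h3, _⟩ <;>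
          rw [h3] at h2 <;> linarith
      exact Real.rpow_le_rpow_of_nonpos (lt_of_lt_of_le one_pos hx1) hxu (by norm_num)
    · exact integrable_f.mono_set (hsub n)
  -- pointwise comparison of the terms
  have hterm : ∀ n, (L (n + N))^2 / (1 + (t (n + N))^2) ≤
      (24 * M / (d - C)) * ((2 * t (n + N)) ^ p * L (n + N)) := by
    intro n
    set tn := t (n + N) with htn_def
    set Ln := L (n + N) with hLn_def
    clear_value tn Ln
    have htn1 : (1:ℝ) ≤ tn := by rw [htn_def]; exact ht1 n
    have htnpos : (0:ℝ) < tn := by rw [htn_def]; exact htpos n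
    have hLn0 : (0:ℝ) < Ln := by rw [hLn_def]; exact hL0 (n + N)
    have hLtn : Ln ≤ tn := by rw [htn_def, hLn_def]; exact hLt n
    have hestn : (d - C) * Ln ≤ M * (2 + 2 * (tn + Ln) ^ ((2:ℝ)/3)) := by
      rw [htn_def, hLn_def]; exact hest (n + N)
    have hK : (d - C) * Ln ≤ 6 * M * tn ^ ((2:ℝ)/3) := by
      have h1 : (tn + Ln) ^ ((2:ℝ)/3) ≤ (2 * tn) ^ ((2:ℝ)/3) :=
        Real.rpow_le_rpow (by linarith) (by linarith) (by norm_num)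
      have h2 : (2 * tn) ^ ((2:ℝ)/3) ≤ 2 * tn ^ ((2:ℝ)/3) := by
        rw [Real.mul_rpow (by norm_num) htnpos.le]
        have h22 : (2:ℝ) ^ ((2:ℝ)/3) ≤ 2 := by
          calc (2:ℝ) ^ ((2:ℝ)/3) ≤ (2:ℝ) ^ ((1:ℝ)) :=
            Real.rpow_le_rpow_of_exponent_le one_le_two (by norm_num)
          _ = 2 := Real.rpow_one 2
        nlinarith [Real.rpow_nonneg htnpos.le ((2:ℝ)/3)]
      have h3 : (1:ℝ) ≤ tn ^ ((2:ℝ)/3) := by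
        calc (1:ℝ) = (1:ℝ) ^ ((2:ℝ)/3) := (Real.one_rpow _).symm
        _ ≤ tn ^ ((2:ℝ)/3) := Real.rpow_le_rpow zero_le_one htn1 (by norm_num)
      nlinarith [mul_le_mul_of_nonneg_left (h1.trans h2) hM.le]
    have hpow : tn ^ ((2:ℝ)/3) / tn ^ 2 = tn ^ p := by
      rw [← Real.rpow_natCast tn 2, ← Real.rpow_sub htnpos]
      norm_num [hp_def]
    have h2p : (1/4 : ℝ) ≤ (2:ℝ) ^ p := by
      have h1 := Real.rpow_le_rpow_of_exponent_le one_le_two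
        (show (-2:ℝ) ≤ p by rw [hp_def]; norm_num)
      rwa [show (2:ℝ) ^ (-2:ℝ) = 1/4 by
        rw [show (-2:ℝ) = ((-2:ℤ):ℝ) by norm_num, Real.rpow_intCast]; norm_num] at h1
    have h2tp : (2 * tn) ^ p = (2:ℝ) ^ p * tn ^ p := Real.mul_rpow (by norm_num) htnpos.le
    have htp_pos : (0:ℝ) < tn ^ p := Real.rpow_pos_of_pos htnpos _
    have hLK : Ln ≤ 6 * M / (d - C) * tn ^ ((2:ℝ)/3) := by
      rw [div_mul_eq_mul_div, le_div_iff₀ hdC]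
      nlinarith
    have step1 : Ln^2 / (1 + tn^2) ≤ Ln * (6 * M / (d - C) * tn ^ ((2:ℝ)/3)) / tn^2 := by
      have hnum : Ln^2 ≤ Ln * (6 * M / (d - C) * tn ^ ((2:ℝ)/3)) := by nlinarith
      have hden : tn^2 ≤ 1 + tn^2 := by nlinarith
      exact div_le_div₀ (by nlinarith) hnum (by nlinarith) hden
    have step2 : Ln * (6 * M / (d - C) * tn ^ ((2:ℝ)/3)) / tn^2
        = (6 * M / (d - C)) * Ln * tn ^ p := by
      rw [← hpow]; ring
    have step3 : (6 * M / (d - C)) * Ln * tn ^ p ≤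
        (24 * M / (d - C)) * ((2 * tn) ^ p * Ln) := by
      rw [h2tp]
      have hK24 : (0:ℝ) ≤ 24 * M / (d - C) := by positivity
      have e1 : (24 * M / (d - C)) * ((1/4) * (tn ^ p * Ln)) ≤
          (24 * M / (d - C)) * ((2:ℝ) ^ p * (tn ^ p * Ln)) :=
        mul_le_mul_of_nonneg_left
          (mul_le_mul_of_nonneg_right h2p (mul_nonneg htp_pos.le hLn0.le)) hK24
      have e2 : (24 * M / (d - C)) * ((1/4) * (tn ^ p * Ln)) =
          (6 * M / (d - C)) * Ln * tn ^ p := by ring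
      have e3 : (24 * M / (d - C)) * ((2:ℝ) ^ p * (tn ^ p * Ln)) =
          (24 * M / (d - C)) * ((2:ℝ) ^ p * tn ^ p * Ln) := by ring
      linarith [e1]
    calc Ln^2 / (1 + tn^2) ≤ Ln * (6 * M / (d - C) * tn ^ ((2:ℝ)/3)) / tn^2 := step1
    _ = (6 * M / (d - C)) * Ln * tn ^ p := step2
    _ ≤ (24 * M / (d - C)) * ((2 * tn) ^ p * Ln) := step3
  -- summability
  have hmeas : ∀ i : ℕ, MeasurableSet (Set.Ioo (a (i + N)) (b (i + N))) :=
    fun i => measurableSet_Ioo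
  have hdisj : Pairwise (Function.onFun Disjoint fun i : ℕ => Set.Ioo (a (i + N)) (b (i + N))) := by
    intro i j hij
    exact hdis (show i + N ≠ j + N by omega)
  have hIntU : IntegrableOn f (⋃ i : ℕ, Set.Ioo (a (i + N)) (b (i + N))) :=
    integrable_f.mono_set (Set.iUnion_subset fun i => hsub i)
  have hsum1 : Summable (fun i : ℕ => ∫ x in Set.Ioo (a (i + N)) (b (i + N)), f x) :=
    (hasSum_integral_iUnion hmeas hdisj hIntU).summable
  have hsum2 : Summable (fun i : ℕ => (L (i + N))^2 / (1 + (t (i + N))^2)) := by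
    refine Summable.of_nonneg_of_le (fun i => ?_) (fun i => ?_)
      (hsum1.mul_left (24 * M / (d - C)))
    · have := htpos i
      positivity
    · refine (hterm i).trans ?_
      have hKpos : (0:ℝ) ≤ 24 * M / (d - C) := by positivity
      exact mul_le_mul_of_nonneg_left (hint i) hKpos
  exact (summable_nat_add_iff N).1 hsum2

theorem stmt9 (Q : Set ℝ) (hsep : Separated Q) (C M : ℝ) (hC : 0 < C) (hM : 0 < M)
    (hcount : ∀ t : ℝ, |(nQ Q t : ℝ) - C * t| ≤ M * (1 + |t| ^ ((2 : ℝ)/3))) :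
    DBM Q = C ∧ ∀ d : ℝ, C < d → ¬ BMWitness Q d := by
  have hfin : ∀ s : Set ℝ, Bornology.IsBounded s → (Q ∩ s).Finite :=
    fun s hs => sep_inter_finite hsep hs
  have hno : ∀ d : ℝ, C < d → ¬ BMWitness Q d := fun d hd => no_witness hfin hcount hM hd
  refine ⟨?_, hno⟩
  have hmem : ∀ d : ℝ, d < C → d ∈ {d : ℝ | BMWitness Q d} :=
    fun d hd => witness_exists hfin hcount hM hd
  have hbdd : BddAbove {d : ℝ | BMWitness Q d} := by
    refine ⟨C, fun d hd => ?_⟩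
    by_contra h
    exact hno d (not_le.1 h) hd
  have hne : {d : ℝ | BMWitness Q d}.Nonempty := ⟨C - 1, hmem _ (by linarith)⟩
  refine le_antisymm (csSup_le hne ?_) ?_
  · intro d hd
    by_contra h
    exact hno d (not_le.1 h) hd
  · by_contra h
    push_neg at h
    have hd : (DBM Q + C) / 2 < C := by unfold DBM at h ⊢; linarith
    have h2 := le_csSup hbdd (hmem _ hd)
    unfold DBM at hd h2
    linarith
end

section
/- For every complex number z, the improper integral ∫_0^∞ log|1 - z^2/t^2| dt converges and equals π |Im z|. -/
/-!
For `t > 0` off `±z` the integrand equals `log |t - z| + log |t + z| - 2 log t`. The function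
`t ↦ Re ((t - w) log (t - w))` is continuous on `ℝ` with derivative `log |t - w| + 1` off `w`; this
holds also for real `w`, since the jump of `log` along the negative axis is invisible in the real
part. Hence `F t = Re ((t - z) log (t - z) + (t + z) log (t + z)) - 2 t log t` is a continuous
primitive of the integrand off finitely many points. Writing `t - w = t (1 - w / t)`, `F t → 0` at
infinity because `(t - w) log (1 - w / t) → -w`, whereas `F 0 = Im z · (arg (-z) - arg z) = -π |Im z|`.
The integrand is integrable near `0` as the logarithm of the norm of a meromorphic function, and at
infinity as it is `O(t⁻²)`.
-/

open MeasureTheory Real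

open Set Filter Topology

theorem integral_Ioi_of_hasDerivAt_off_countable_of_tendsto {E : Type*} [NormedAddCommGroup E]
    [NormedSpace ℝ E] [CompleteSpace E] {f f' : ℝ → E} {a : ℝ} {m : E} {s : Set ℝ}
    (hs : s.Countable) (hcont : ContinuousOn f (Ici a))
    (hderiv : ∀ x ∈ Ioi a \ s, HasDerivAt f (f' x) x) (f'int : IntegrableOn f' (Ioi a))
    (hf : Tendsto f atTop (𝓝 m)) : ∫ x in Ioi a, f' x = m - f a := by
  refine tendsto_nhds_unique (intervalIntegral_tendsto_integral_Ioi a f'int tendsto_id) ?_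
  refine (hf.sub_const (f a)).congr' ?_
  filter_upwards [eventually_ge_atTop a] with b hab
  refine (integral_eq_of_hasDerivAt_off_countable_of_le f f' hab hs
    (hcont.mono Icc_subset_Ici_self) (fun x hx => hderiv x ⟨hx.1.1, hx.2⟩) ?_).symm
  exact (intervalIntegrable_iff_integrableOn_Ioc_of_le hab).2
    (f'int.mono_set Ioc_subset_Ioi_self)

noncomputable def reMulLogSub (w : ℂ) (t : ℝ) : ℝ :=
  (((t : ℂ) - w) * Complex.log ((t : ℂ) - w)).re

lemma reMulLogSub_of_im_eq_zero {w : ℂ} (hw : w.im = 0) (t : ℝ) :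
    reMulLogSub w t = (t - w.re) * Real.log (t - w.re) := by
  have h : (t : ℂ) - w = ((t - w.re : ℝ) : ℂ) := Complex.ext (by simp) (by simp [hw])
  rw [reMulLogSub, h, Complex.re_ofReal_mul, Complex.log_re, Complex.norm_real, norm_eq_abs,
    log_abs]

lemma ofReal_sub_mem_slitPlane {w : ℂ} (hw : w.im ≠ 0) (t : ℝ) :
    (t : ℂ) - w ∈ Complex.slitPlane :=
  Complex.mem_slitPlane_iff.2 (Or.inr (by simpa using hw))

lemma continuous_reMulLogSub (w : ℂ) : Continuous (reMulLogSub w) := by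
  by_cases hw : w.im = 0
  · rw [funext (reMulLogSub_of_im_eq_zero hw)]
    exact continuous_mul_log.comp (continuous_sub_right _)
  · have hsub : Continuous fun t : ℝ => (t : ℂ) - w := by fun_prop
    exact Complex.continuous_re.comp (hsub.mul (hsub.clog (ofReal_sub_mem_slitPlane hw)))

lemma hasDerivAt_reMulLogSub (w : ℂ) {t : ℝ} (ht : (t : ℂ) ≠ w) :
    HasDerivAt (reMulLogSub w) (Real.log ‖(t : ℂ) - w‖ + 1) t := by
  by_cases hw : w.im = 0
  · have hsub : (t : ℂ) - w = ((t - w.re : ℝ) : ℂ) := Complex.ext (by simp) (by simp [hw])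
    have hne : t - w.re ≠ 0 := fun h => ht (by rw [← sub_eq_zero, hsub, h, Complex.ofReal_zero])
    rw [funext (reMulLogSub_of_im_eq_zero hw), hsub, Complex.norm_real, norm_eq_abs, log_abs]
    simpa [Function.comp_def] using
      (hasDerivAt_mul_log hne).comp t ((hasDerivAt_id t).sub_const w.re)
  · have hslit := ofReal_sub_mem_slitPlane hw t
    have hsub : HasDerivAt (fun u : ℂ => u - w) 1 t := (hasDerivAt_id _).sub_const w
    have hlog : HasDerivAt (fun u : ℂ => Complex.log (u - w)) ((t - w)⁻¹) t := by
      simpa [Function.comp_def] using (Complex.hasDerivAt_log hslit).comp (t : ℂ) hsub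
    refine (hsub.fun_mul hlog).real_of_complex.congr_deriv ?_
    simp [mul_inv_cancel₀ (Complex.slitPlane_ne_zero hslit), Complex.log_re]

lemma log_norm_one_sub_sq_div_sq {z t : ℂ} (ht : t ≠ 0) (h₁ : t - z ≠ 0) (h₂ : t + z ≠ 0) :
    Real.log ‖1 - z ^ 2 / t ^ 2‖ = Real.log ‖t - z‖ + Real.log ‖t + z‖ - 2 * Real.log ‖t‖ := by
  have h : 1 - z ^ 2 / t ^ 2 = (t - z) * (t + z) / t ^ 2 := by field_simp; ring
  rw [h, norm_div, norm_mul, norm_pow, Real.log_div (by positivity) (by positivity),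
    Real.log_mul (norm_ne_zero_iff.2 h₁) (norm_ne_zero_iff.2 h₂), Real.log_pow]
  push_cast
  ring

noncomputable def logOneSubSqDivPrimitive (z : ℂ) (t : ℝ) : ℝ :=
  reMulLogSub z t + reMulLogSub (-z) t - 2 * reMulLogSub 0 t

lemma continuous_logOneSubSqDivPrimitive (z : ℂ) : Continuous (logOneSubSqDivPrimitive z) :=
  ((continuous_reMulLogSub z).add (continuous_reMulLogSub (-z))).sub
    (continuous_const.mul (continuous_reMulLogSub 0))

lemma hasDerivAt_logOneSubSqDivPrimitive (z : ℂ) {t : ℝ} (ht : 0 < t) (h₁ : (t : ℂ) ≠ z)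
    (h₂ : (t : ℂ) ≠ -z) :
    HasDerivAt (logOneSubSqDivPrimitive z) (Real.log ‖1 - z ^ 2 / (t : ℂ) ^ 2‖) t := by
  have ht' : (t : ℂ) ≠ 0 := by exact_mod_cast ht.ne'
  refine (((hasDerivAt_reMulLogSub z h₁).add (hasDerivAt_reMulLogSub (-z) h₂)).sub
    ((hasDerivAt_reMulLogSub 0 ht').const_mul 2)).congr_deriv ?_
  rw [log_norm_one_sub_sq_div_sq ht' (sub_ne_zero.2 h₁) (by rwa [← sub_neg_eq_add, sub_ne_zero])]
  simp only [sub_neg_eq_add, sub_zero]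
  ring

lemma logOneSubSqDivPrimitive_zero (z : ℂ) : logOneSubSqDivPrimitive z 0 = -(π * |z.im|) := by
  have h : logOneSubSqDivPrimitive z 0 = z.im * ((-z).arg - z.arg) := by
    simp only [logOneSubSqDivPrimitive, reMulLogSub, Complex.ofReal_zero, zero_sub, neg_mul,
      Complex.neg_re, Complex.mul_re, Complex.log_re, norm_neg, Complex.log_im, neg_sub,
      sub_neg_eq_add, zero_add, sub_add_sub_cancel, sub_self, Complex.log_zero, mul_zero,
      Complex.zero_re, sub_zero]
    ring
  rcases lt_trichotomy z.im 0 with hz | hz | hz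
  · rw [h, Complex.arg_neg_eq_arg_add_pi_of_im_neg hz, abs_of_neg hz]
    ring
  · simp [h, hz]
  · rw [h, Complex.arg_neg_eq_arg_sub_pi_of_im_pos hz, abs_of_pos hz]
    ring

lemma reMulLogSub_eq_of_norm_lt (w : ℂ) {t : ℝ} (ht : ‖w‖ < t) :
    reMulLogSub w t = (t - w.re) * Real.log t + (((t : ℂ) - w) * Complex.log (1 - w / t)).re := by
  have ht0 : 0 < t := (norm_nonneg w).trans_lt ht
  have htC : (t : ℂ) ≠ 0 := by exact_mod_cast ht0.ne'
  have hne : 1 - w / t ≠ 0 := by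
    rw [sub_ne_zero, ne_eq, eq_div_iff htC, one_mul]
    rintro rfl
    simp [abs_of_pos ht0] at ht
  have hlog : Complex.log ((t : ℂ) - w) = Real.log t + Complex.log (1 - w / t) := by
    rw [← Complex.log_ofReal_mul ht0 hne]
    congr 1
    field_simp
  rw [reMulLogSub, hlog, mul_add, Complex.add_re, Complex.re_mul_ofReal]
  simp

lemma tendsto_sub_mul_log_one_sub_div (w : ℂ) :
    Tendsto (fun t : ℝ => ((t : ℂ) - w) * Complex.log (1 - w / t)) atTop (𝓝 (-w)) := by
  have hdiv : Tendsto (fun t : ℝ => w / (t : ℂ)) atTop (𝓝 0) := by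
    simpa [div_eq_mul_inv] using tendsto_inv_atTop_zero.ofReal.const_mul w
  have hmul : Tendsto (fun t : ℝ => (t : ℂ) * Complex.log (1 + -w / t)) atTop (𝓝 (-w)) := by
    refine Complex.tendsto_mul_log_one_add_of_tendsto (tendsto_const_nhds.congr' ?_)
    filter_upwards [eventually_ne_atTop 0] with t ht
    exact (mul_div_cancel₀ _ (Complex.ofReal_ne_zero.2 ht)).symm
  have hlog : Tendsto (fun t : ℝ => Complex.log (1 - w / t)) atTop (𝓝 0) := by
    have h1 : Tendsto (fun t : ℝ => 1 - w / t) atTop (𝓝 1) := by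
      simpa using (tendsto_const_nhds (x := (1 : ℂ))).sub hdiv
    simpa [Function.comp_def] using (continuousAt_clog Complex.one_mem_slitPlane).tendsto.comp h1
  convert hmul.sub (hlog.const_mul w) using 2 with t
  · rw [neg_div, ← sub_eq_add_neg]
    ring
  · simp

lemma tendsto_logOneSubSqDivPrimitive_atTop (z : ℂ) :
    Tendsto (logOneSubSqDivPrimitive z) atTop (𝓝 0) := by
  have h := ((Complex.continuous_re.tendsto _).comp (tendsto_sub_mul_log_one_sub_div z)).add
    ((Complex.continuous_re.tendsto _).comp (tendsto_sub_mul_log_one_sub_div (-z)))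
  simp only [Complex.neg_re, neg_neg, neg_add_cancel] at h
  refine h.congr' ?_
  filter_upwards [eventually_gt_atTop ‖z‖] with t ht
  have h0 : ‖(0 : ℂ)‖ < t := by simpa using (norm_nonneg z).trans_lt ht
  simp only [logOneSubSqDivPrimitive, reMulLogSub_eq_of_norm_lt z ht,
    reMulLogSub_eq_of_norm_lt (-z) (by rwa [norm_neg]), reMulLogSub_eq_of_norm_lt 0 h0,
    Function.comp_apply]
  simp only [Complex.mul_re, Complex.sub_re, Complex.ofReal_re, Complex.sub_im, Complex.ofReal_im,
    zero_sub, neg_mul, sub_neg_eq_add, Complex.add_re, Complex.add_im, zero_add, Complex.neg_re,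
    Complex.zero_re, sub_zero, zero_div, Complex.log_one, mul_zero, add_zero]
  ring

lemma abs_log_norm_one_sub_le {w : ℂ} (hw : ‖w‖ ≤ 1 / 2) : |Real.log ‖1 - w‖| ≤ 3 / 2 * ‖w‖ := by
  calc |Real.log ‖1 - w‖| = |(Complex.log (1 + -w)).re| := by
        rw [Complex.log_re, ← sub_eq_add_neg]
    _ ≤ ‖Complex.log (1 + -w)‖ := Complex.abs_re_le_norm _
    _ ≤ 3 / 2 * ‖-w‖ := Complex.norm_log_one_add_half_le_self (by rwa [norm_neg])
    _ = 3 / 2 * ‖w‖ := by rw [norm_neg]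

lemma intervalIntegrable_log_norm_one_sub_sq_div_sq (z : ℂ) (a b : ℝ) :
    IntervalIntegrable (fun t : ℝ => Real.log ‖1 - z ^ 2 / (t : ℂ) ^ 2‖) volume a b := by
  apply MeromorphicOn.intervalIntegrable_log_norm
  intro x _
  have : AnalyticAt ℝ (fun t : ℝ => (t : ℂ)) x := Complex.ofRealCLM.analyticAt x
  fun_prop

lemma integrableOn_Ioi_log_norm_one_sub_sq_div_sq_of_le (z : ℂ) {T : ℝ} (hT : 0 < T)
    (hzT : 2 * ‖z‖ ≤ T) :
    IntegrableOn (fun t : ℝ => Real.log ‖1 - z ^ 2 / (t : ℂ) ^ 2‖) (Ioi T) := by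
  refine Integrable.mono' ((integrableOn_Ioi_rpow_of_lt (by norm_num : (-2 : ℝ) < -1) hT).const_mul
    (3 / 2 * ‖z‖ ^ 2)) (Measurable.aestronglyMeasurable (by fun_prop)) ?_
  filter_upwards [ae_restrict_mem measurableSet_Ioi] with t ht
  have ht0 : 0 < t := hT.trans ht
  have hnorm : ‖z ^ 2 / (t : ℂ) ^ 2‖ = ‖z‖ ^ 2 / t ^ 2 := by
    rw [norm_div, norm_pow, norm_pow, Complex.norm_real, norm_eq_abs, abs_of_pos ht0]
  have hsmall : ‖z ^ 2 / (t : ℂ) ^ 2‖ ≤ 1 / 2 := by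
    rw [hnorm, div_le_iff₀ (by positivity)]
    nlinarith [mul_self_le_mul_self (by positivity) (hzT.trans ht.le)]
  calc ‖Real.log ‖1 - z ^ 2 / (t : ℂ) ^ 2‖‖ ≤ 3 / 2 * ‖z ^ 2 / (t : ℂ) ^ 2‖ :=
        abs_log_norm_one_sub_le hsmall
    _ = 3 / 2 * ‖z‖ ^ 2 * t ^ (-2 : ℝ) := by
        rw [hnorm, rpow_neg ht0.le, rpow_two]
        ring

lemma integrableOn_log_norm_one_sub_sq_div_sq (z : ℂ) :
    IntegrableOn (fun t : ℝ => Real.log ‖1 - z ^ 2 / (t : ℂ) ^ 2‖) (Ioi 0) := by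
  have hT : 0 < 2 * ‖z‖ + 1 := by positivity
  rw [← Ioc_union_Ioi_eq_Ioi hT.le]
  exact (intervalIntegrable_log_norm_one_sub_sq_div_sq z 0 _).1.union
    (integrableOn_Ioi_log_norm_one_sub_sq_div_sq_of_le z hT (by linarith))

theorem stmt18 (z : ℂ) :
    IntegrableOn (fun t : ℝ => Real.log ‖1 - z^2 / (t : ℂ)^2‖) (Set.Ioi 0) ∧
    ∫ t in Set.Ioi (0 : ℝ), Real.log ‖1 - z^2 / (t : ℂ)^2‖ = π * |z.im| := by
  have hint := integrableOn_log_norm_one_sub_sq_div_sq z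
  refine ⟨hint, ?_⟩
  have hs : ({z.re, -z.re} : Set ℝ).Countable := (toFinite _).countable
  rw [integral_Ioi_of_hasDerivAt_off_countable_of_tendsto hs
    (continuous_logOneSubSqDivPrimitive z).continuousOn ?_ hint
    (tendsto_logOneSubSqDivPrimitive_atTop z), logOneSubSqDivPrimitive_zero, zero_sub, neg_neg]
  rintro t ⟨ht, hts⟩
  simp only [mem_insert_iff, mem_singleton_iff, not_or] at hts
  refine hasDerivAt_logOneSubSqDivPrimitive z ht (fun h => hts.1 ?_) (fun h => hts.2 ?_) <;>
    simpa using congrArg Complex.re h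
end
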